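/- Let W be a right infinite word that is prime (every subword occurs infinitely often) and not ultimately periodic, and let V be a finite word such that V^m is a subword of W for every m ≥ 1. Then for every n ≥ 1 there exists a right infinite word U such that every finite subword of V^n U is a subword of W, and U does not have V as an initial subword (prefix). -/

import Mathlib

/-- The factor (subword) of the right infinite word `W` starting at position `i`, of length `n`. -/
def FactorAt {X : Type*} (W : ℕ → X) (i n : ℕ) : List X :=
  (List.range n).map fun k => W (i + k)

/-- The finite word `u` occurs in `W` at position `i`. -/
def OccursAt {X : Type*} (W : ℕ → X) (u : List X) (i : ℕ) : Prop :=
  FactorAt W i u.length = u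

/-- `u` is a (finite) subword of the right infinite word `W`. -/
def IsFactor {X : Type*} (W : ℕ → X) (u : List X) : Prop :=
  ∃ i, OccursAt W u i

/-- A right infinite word is prime if every finite subword occurs infinitely often. -/
def IsPrimeWord {X : Type*} (W : ℕ → X) : Prop :=
  ∀ u, IsFactor W u → ∀ N, ∃ i, N ≤ i ∧ OccursAt W u i

/-- `W` is ultimately periodic. -/
def UltPeriodic {X : Type*} (W : ℕ → X) : Prop :=
  ∃ N p, 1 ≤ p ∧ ∀ i, N ≤ i → W (i + p) = W i

/-- `k`-fold concatenation power of a finite word. -/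
def wpow {X : Type*} (w : List X) (k : ℕ) : List X := (List.replicate k w).flatten

/-- The periodic right infinite word `w^ω`. -/
def perWord {X : Type*} [Inhabited X] (w : List X) : ℕ → X :=
  fun n => w.getD (n % w.length) default

/-- The right infinite word `w₁ w₂^ω`. -/
def glueWord {X : Type*} [Inhabited X] (w₁ w₂ : List X) : ℕ → X := fun n =>
  if n < w₁.length then w₁.getD n default
  else w₂.getD ((n - w₁.length) % w₂.length) default

/-- The right infinite word obtained by prefixing `U` with the finite word `w`. -/
def prependWord {X : Type*} (w : List X) (U : ℕ → X) : ℕ → X := fun n =>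
  if n < w.length then w.getD n (U 0) else U (n - w.length)

/-- The finite word `w` is a prefix of the right infinite word `U`. -/
def HasPrefixWord {X : Type*} (U : ℕ → X) (w : List X) : Prop :=
  FactorAt U 0 w.length = w



/-!
Fix an occurrence of `V^n` in `W` at position `j` and extend it to a longest run `V^k V^n` of
copies of `V` starting at `j`: a longest run exists, since otherwise `W` would be periodic with
period `|V|` from `j` on. The suffix `U` of `W` right after that run does not begin with `V` by
maximality, and `V^n U` is itself a suffix of `W`, so each of its factors is a factor of `W`.
-/

section Words

variable {X : Type*}

lemma factorAt_length (W : ℕ → X) (i n : ℕ) : (FactorAt W i n).length = n := by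
  simp [FactorAt]

lemma factorAt_add (W : ℕ → X) (i p q : ℕ) :
    FactorAt W i (p + q) = FactorAt W i p ++ FactorAt W (i + p) q := by
  simp only [FactorAt, List.range_add, List.map_append, List.map_map, Function.comp_def,
    add_assoc]

lemma factorAt_shift (W : ℕ → X) (c i n : ℕ) :
    FactorAt (fun t => W (c + t)) i n = FactorAt W (c + i) n := by
  simp only [FactorAt, add_assoc]

lemma occursAt_append {W : ℕ → X} {u v : List X} {i : ℕ} :
    OccursAt W (u ++ v) i ↔ OccursAt W u i ∧ OccursAt W v (i + u.length) := by
  rw [OccursAt, List.length_append, factorAt_add]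
  exact ⟨fun h => List.append_inj h (factorAt_length W i u.length),
    fun ⟨hu, hv⟩ => by rw [hu, hv]⟩

lemma OccursAt.apply_add {W : ℕ → X} {u : List X} {i : ℕ} (h : OccursAt W u i) {k : ℕ}
    (hk : k < u.length) : W (i + k) = u[k] := by
  have := List.getElem_of_eq h (i := k) (by rwa [factorAt_length])
  simpa [FactorAt] using this

lemma IsFactor.of_shift {W : ℕ → X} {c : ℕ} {u : List X}
    (h : IsFactor (fun t => W (c + t)) u) : IsFactor W u := by
  obtain ⟨i, hi⟩ := h
  exact ⟨c + i, by rwa [OccursAt, ← factorAt_shift]⟩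

lemma hasPrefixWord_shift_iff {W : ℕ → X} {c : ℕ} {v : List X} :
    HasPrefixWord (fun t => W (c + t)) v ↔ OccursAt W v c := by
  rw [HasPrefixWord, factorAt_shift, add_zero, OccursAt]

lemma prependWord_of_occursAt {W : ℕ → X} {w : List X} {i : ℕ} (h : OccursAt W w i) :
    prependWord w (fun t => W (i + w.length + t)) = fun t => W (i + t) := by
  funext t
  unfold prependWord
  split_ifs with ht
  · rw [List.getD_eq_getElem _ _ ht, h.apply_add ht]
  · dsimp only
    congr 1
    omega

end Words

section Powers

variable {X : Type*}

@[simp]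
lemma wpow_zero (V : List X) : wpow V 0 = [] := rfl

lemma wpow_add (V : List X) (a b : ℕ) : wpow V (a + b) = wpow V a ++ wpow V b := by
  rw [wpow, List.replicate_add, List.flatten_append, wpow, wpow]

lemma wpow_succ (V : List X) (m : ℕ) : wpow V (m + 1) = wpow V m ++ V := by
  rw [wpow_add]
  simp [wpow]

lemma wpow_succ' (V : List X) (m : ℕ) : wpow V (m + 1) = V ++ wpow V m := by
  rw [Nat.add_comm, wpow_add]
  simp [wpow]

lemma length_wpow (V : List X) (m : ℕ) : (wpow V m).length = m * V.length := by
  simp [wpow, List.sum_replicate]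

/-- The run `V^(m+1)` at `j` contains `V^m` both at `j` and at `j + |V|`. -/
lemma ultPeriodic_of_forall_occursAt_wpow {W : ℕ → X} {V : List X} (hV : V ≠ []) {j : ℕ}
    (h : ∀ m, OccursAt W (wpow V m) j) : UltPeriodic W := by
  have hL : 1 ≤ V.length := List.length_pos_iff.mpr hV
  refine ⟨j, V.length, hL, fun i hi => ?_⟩
  obtain ⟨t, rfl⟩ := Nat.exists_eq_add_of_le hi
  have ht : t < (wpow V (t + 1)).length := by
    rw [length_wpow]
    nlinarith
  have hleft := h (t + 2)
  have hright := h (t + 2)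
  rw [wpow_succ, occursAt_append] at hleft
  rw [wpow_succ', occursAt_append] at hright
  rw [add_right_comm, hright.2.apply_add ht, hleft.1.apply_add ht]

lemma exists_maximal_run_wpow {W : ℕ → X} (hnp : ¬ UltPeriodic W) {V : List X} (hV : V ≠ [])
    {n j : ℕ} (h : OccursAt W (wpow V n) j) :
    ∃ k, OccursAt W (wpow V k ++ wpow V n) j ∧ ¬ OccursAt W (wpow V k ++ wpow V n ++ V) j := by
  by_contra! hext
  have hrun : ∀ k, OccursAt W (wpow V k ++ wpow V n) j := by
    intro k
    induction k with
    | zero => simpa using h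
    | succ k ih =>
      rw [← wpow_add, Nat.add_right_comm, wpow_succ, wpow_add]
      exact hext k ih
  exact hnp (ultPeriodic_of_forall_occursAt_wpow hV fun m => (occursAt_append.1 (hrun m)).1)

end Powers

theorem exists_tail_without_prefix_general {X : Type*} (W : ℕ → X)
    (hnp : ¬ UltPeriodic W)
    (V : List X) (hV : V ≠ []) (hpow : ∀ m : ℕ, IsFactor W (wpow V m)) :
    ∀ n : ℕ, 1 ≤ n → ∃ U : ℕ → X,
      (∀ u : List X, IsFactor (prependWord (wpow V n) U) u → IsFactor W u) ∧
        ¬ HasPrefixWord U V := by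
  intro n _
  obtain ⟨j, hj⟩ := hpow n
  obtain ⟨k, hrun, hmax⟩ := exists_maximal_run_wpow hnp hV hj
  have hocc : OccursAt W (wpow V n) (j + (wpow V k).length) := (occursAt_append.1 hrun).2
  refine ⟨fun t => W (j + (wpow V k).length + (wpow V n).length + t), ?_, ?_⟩
  · rw [prependWord_of_occursAt hocc]
    exact fun u => IsFactor.of_shift
  · rw [hasPrefixWord_shift_iff]
    intro hV'
    exact hmax (occursAt_append.2 ⟨hrun, by rwa [List.length_append, ← add_assoc]⟩)

/-- If `W` is a prime, not ultimately periodic, right infinite word and `V` is a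
nonempty finite word all of whose powers are subwords of `W`, then for every `n ≥ 1`
there is a right infinite word `U` such that every subword of `V^n U` is a subword of
`W` and `U` does not have `V` as a prefix. -/
theorem exists_tail_without_prefix {X : Type*} (W : ℕ → X)
    (hprime : IsPrimeWord W) (hnp : ¬ UltPeriodic W)
    (V : List X) (hV : V ≠ []) (hpow : ∀ m : ℕ, IsFactor W (wpow V m)) :
    ∀ n : ℕ, 1 ≤ n → ∃ U : ℕ → X,
      (∀ u : List X, IsFactor (prependWord (wpow V n) U) u → IsFactor W u) ∧
        ¬ HasPrefixWord U V :=
  exists_tail_without_prefix_general W hnp V hV hpow
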